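/- Let $k \geq 2$ and $1 \leq m \leq k-1$ be integers. Suppose the edges of the complete graph $K_n$ are colored with at most $c := n^{1/m}/(2(k-m)^{1/m})$ colors, and assume $n$ is large enough that the iterative neighborhood argument applies (in particular $(k-m)^{j/m} n^{1-j/m} \geq k-m$ for $j \leq m$). Then there exists a set of $k$ vertices spanning at most $\binom{k}{2} - m(k-m) - \binom{m}{2} + m$ distinct colors. -/

import Mathlib

/-!
Pick a vertex `v`; by pigeonhole some color class of the edges from `v` to the remaining
vertices has at least a `1 / |C|` fraction of them. Recurse inside that class: after `m` steps the
chosen vertices `v₁, …, vₘ` only use the `m` colors of their classes on the edges towards later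
vertices, and `k - m` vertices survive, which span at most `(k - m).choose 2` further colors.
With `t = (n / (k - m)) ^ (1 / m) ≥ 2 |C|` each step loses at most a factor `t`, so
`n = (k - m) t ^ m` vertices suffice.
-/

open Finset

section SpannedColors

variable {α C : Type*} [DecidableEq C] (χ : Sym2 α → C)

theorem exists_large_monochromatic_nbhd [Fintype C] [Nonempty C] (v : α) (A : Finset α) {b : ℝ}
    (hb : Fintype.card C * b ≤ #A) : ∃ c : C, b ≤ #{y ∈ A | χ s(v, y) = c} := by
  obtain ⟨c, -, hc⟩ := exists_le_card_fiber_of_nsmul_le_card_of_maps_to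
    (fun y _ => mem_univ (χ s(v, y))) univ_nonempty (by simpa [nsmul_eq_mul] using hb)
  exact ⟨c, hc⟩

variable [DecidableEq α]

def spannedColors (S : Finset α) : Finset C :=
  S.offDiag.image fun p => χ s(p.1, p.2)

theorem card_spannedColors_le (S : Finset α) : #(spannedColors χ S) ≤ (#S).choose 2 := by
  calc #(spannedColors χ S) = #((S.offDiag.image Sym2.mk.uncurry).image χ) := by
        rw [spannedColors, image_image]; rfl
    _ ≤ #(S.offDiag.image Sym2.mk.uncurry) := card_image_le
    _ = (#S).choose 2 := Sym2.card_image_offDiag S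

theorem spannedColors_insert_subset {S : Finset α} {v : α} {c : C}
    (hS : ∀ y ∈ S, χ s(v, y) = c) :
    spannedColors χ (insert v S) ⊆ insert c (spannedColors χ S) := by
  intro x hx
  simp only [spannedColors, mem_image, mem_offDiag, Prod.exists] at hx
  obtain ⟨a, b, ⟨ha, hb, hne⟩, rfl⟩ := hx
  rw [mem_insert] at ha hb ⊢
  rcases ha with rfl | ha <;> rcases hb with rfl | hb
  · exact absurd rfl hne
  · exact Or.inl (hS b hb)
  · exact Or.inl (Sym2.eq_swap ▸ hS a ha)
  · exact Or.inr (mem_image.2 ⟨(a, b), mem_offDiag.2 ⟨ha, hb, hne⟩, rfl⟩)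

theorem exists_subset_card_spannedColors_le [Fintype C] [Nonempty C] (q : ℕ) (hq : 1 ≤ q) {t : ℝ}
    (ht : 2 * Fintype.card C ≤ t) (i : ℕ) (A : Finset α) (hA : q * t ^ i ≤ #A) :
    ∃ S ⊆ A, #S = i + q ∧ #(spannedColors χ S) ≤ i + q.choose 2 := by
  induction i generalizing A with
  | zero =>
    obtain ⟨S, hSA, hS⟩ := exists_subset_card_eq (s := A) (n := q) (by simpa using hA)
    exact ⟨S, hSA, by omega, by simpa [hS] using card_spannedColors_le χ S⟩
  | succ i ih =>
    set x : ℝ := q * t ^ i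
    have hC : (1 : ℝ) ≤ Fintype.card C := mod_cast Fintype.card_pos
    have hx : 1 ≤ x := one_le_mul_of_one_le_of_one_le (mod_cast hq) (one_le_pow₀ (by linarith))
    have hAx : x * t ≤ #A := by rwa [pow_succ, ← mul_assoc] at hA
    -- `#A ≥ t x ≥ 2 |C| x ≥ |C| x + 1`, which leaves room to remove `v`
    have hA : Fintype.card C * x + 1 ≤ #A := by nlinarith
    obtain ⟨v, hv⟩ : A.Nonempty := card_pos.1 (by exact_mod_cast (by nlinarith : (0 : ℝ) < #A))
    have hErase : Fintype.card C * x ≤ #(A.erase v) := by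
      rw [card_erase_of_mem hv, Nat.cast_sub (card_pos.2 ⟨v, hv⟩)]
      push_cast
      linarith
    obtain ⟨c, hc⟩ := exists_large_monochromatic_nbhd χ v (A.erase v) hErase
    obtain ⟨S, hSA, hS, hSχ⟩ := ih _ hc
    have hSA' : S ⊆ A.erase v := hSA.trans (filter_subset _ _)
    have hvS : v ∉ S := fun h => notMem_erase v A (hSA' h)
    refine ⟨insert v S, insert_subset hv (hSA'.trans (erase_subset _ _)),
      by rw [card_insert_of_notMem hvS, hS]; ring, ?_⟩
    calc #(spannedColors χ (insert v S))
        ≤ #(insert c (spannedColors χ S)) :=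
          card_le_card (spannedColors_insert_subset χ fun y hy => (mem_filter.1 (hSA hy)).2)
      _ ≤ #(spannedColors χ S) + 1 := card_insert_le _ _
      _ ≤ i + 1 + q.choose 2 := by omega

end SpannedColors

theorem Nat.add_choose_two (a b : ℕ) : (a + b).choose 2 = a.choose 2 + a * b + b.choose 2 := by
  simp [Nat.add_choose_eq, Finset.Nat.antidiagonal_succ, add_assoc, add_comm]

theorem few_colors_gives_cheap_clique_general (k m n : ℕ) (hm1 : 1 ≤ m) (hm2 : m ≤ k - 1)
    (hkn : k ≤ n)
    {C : Type*} [Fintype C] [DecidableEq C] (χ : Sym2 (Fin n) → C)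
    (hc : (Fintype.card C : ℝ) ≤ (n : ℝ) ^ ((1 : ℝ) / m) / (2 * ((k - m : ℕ) : ℝ) ^ ((1 : ℝ) / m))) :
    ∃ S : Finset (Fin n), S.card = k ∧
      (S.offDiag.image fun p => χ s(p.1, p.2)).card ≤
        k.choose 2 - m * (k - m) - m.choose 2 + m := by
  set q := k - m
  have hk : k = m + q := by omega
  have hq : (0 : ℝ) < q := by norm_cast; omega
  have : Nonempty C := ⟨χ s(⟨0, by omega⟩, ⟨0, by omega⟩)⟩
  have ht : 2 * Fintype.card C ≤ ((n : ℝ) / q) ^ ((1 : ℝ) / m) := by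
    rw [le_div_iff₀ (by positivity)] at hc
    rw [Real.div_rpow (by positivity) hq.le, le_div_iff₀ (by positivity)]
    linarith
  have htm : (q : ℝ) * (((n : ℝ) / q) ^ ((1 : ℝ) / m)) ^ m = #(univ : Finset (Fin n)) := by
    rw [one_div, Real.rpow_inv_natCast_pow (by positivity) (by omega),
      mul_div_cancel₀ _ hq.ne', card_univ, Fintype.card_fin]
  obtain ⟨S, -, hS, hSχ⟩ :=
    exists_subset_card_spannedColors_le χ q (by omega) ht m univ htm.le
  refine ⟨S, by omega, ?_⟩
  have hchoose := Nat.add_choose_two m q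
  rw [← hk] at hchoose
  change #(spannedColors χ S) ≤ _
  omega

/-- If `K_n` is edge-colored with at most `n^(1/m) / (2 (k-m)^(1/m))` colors
(and `n` is large enough for the iterative neighborhood argument), then some `k` vertices span
at most `C(k,2) - m(k-m) - C(m,2) + m` distinct colors. -/
theorem few_colors_gives_cheap_clique (k m n : ℕ) (hk : 2 ≤ k) (hm1 : 1 ≤ m) (hm2 : m ≤ k - 1)
    (hkn : k ≤ n)
    {C : Type*} [Fintype C] [DecidableEq C] (χ : Sym2 (Fin n) → C)
    (hc : (Fintype.card C : ℝ) ≤ (n : ℝ) ^ ((1 : ℝ) / m) / (2 * ((k - m : ℕ) : ℝ) ^ ((1 : ℝ) / m)))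
    (hlarge : ∀ j ≤ m,
      ((k - m : ℕ) : ℝ) ≤ ((k - m : ℕ) : ℝ) ^ ((j : ℝ) / m) * (n : ℝ) ^ (1 - (j : ℝ) / m)) :
    ∃ S : Finset (Fin n), S.card = k ∧
      (S.offDiag.image fun p => χ s(p.1, p.2)).card ≤
        k.choose 2 - m * (k - m) - m.choose 2 + m :=
  few_colors_gives_cheap_clique_general k m n hm1 hm2 hkn χ hc
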